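/- Let 0 < s < 1 and let ρ be a bounded compactly supported probability density. Let H = T + λω be an Anderson Hamiltonian on ℓ²(V) over a graph with uniformly bounded vertex degree, where the (ω_v) are i.i.d. with density ρ and λ > 0. Then for every vertex x and every z ∈ ℂ \ ℝ, the conditional expectation over ω_x of |⟨δ_x, (H - z)⁻¹ δ_x⟩|^s is at most C_1(s,ρ) λ^{-s}, where C_1(s,ρ) = ‖ρ‖_∞^s · 2^s s^{-s}/(1-s). -/

import Mathlib

/-!
The Hamiltonian depends on `ω x` only through the rank-one term `λ ω_x |δ_x⟩⟨δ_x|`, so the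
resolvent identity `R₁ - R₂ = R₁ (H₂ - H₁) R₂` gives
`G(x,x;z)|_{ω_x = u} - G(x,x;z)|_{ω_x = u'} = λ (u' - u) G|_u G|_{u'}`.
Hence either `G(x,x;z)` vanishes identically, or `G(x,x;z) = (λ u + c)⁻¹` with `c` independent of
`u = ω x`; in both cases `|G(x,x;z)| ≤ (λ |u - b|)⁻¹` for `b = -Re c / λ`. The fractional moment
`∫ |u - b|^{-s} ρ(u) du` is bounded by splitting at `|u - b| = t`: near `b` use `ρ ≤ ‖ρ‖_∞` and
the integrability of `|v|^{-s}`, away from `b` use `|u - b|^{-s} ≤ t^{-s}` and `∫ ρ = 1`.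
The choice `t = s / (2 ‖ρ‖_∞)` yields the constant `C₁(s,ρ)`.
-/

open MeasureTheory
open scoped ComplexInnerProductSpace

/-- The canonical basis vector `δ_x` of `ℓ²(V)`. -/
noncomputable def delta {V : Type*} [DecidableEq V] (x : V) : lp (fun _ : V => ℂ) 2 :=
  lp.single 2 x 1

open Set

theorem sub_eq_mul_sub_mul_of_mul_eq_one {R : Type*} [Ring R] {a b a' b' : R}
    (ha : a' * a = 1) (hb : b * b' = 1) : a' - b' = a' * (b - a) * b' := by
  rw [mul_sub, sub_mul, mul_assoc, hb, ha, mul_one, one_mul]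

section Delta

variable {V : Type*} [DecidableEq V]

theorem inner_delta_left (x : V) (f : lp (fun _ : V => ℂ) 2) : ⟪delta x, f⟫ = f x := by
  simp [delta, lp.inner_single_left]

theorem delta_apply (x v : V) : delta x v = if v = x then 1 else 0 := by
  simp [delta, Pi.single_apply]

theorem continuousLinearMap_ext_delta {S T : lp (fun _ : V => ℂ) 2 →L[ℂ] lp (fun _ : V => ℂ) 2}
    (h : ∀ v w, ⟪delta v, S (delta w)⟫ = ⟪delta v, T (delta w)⟫) : S = T := by
  have hdelta : ∀ w, S (delta w) = T (delta w) := fun w =>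
    lp.ext <| funext fun v => by simpa only [inner_delta_left] using h v w
  ext1 φ
  have hφ : HasSum (fun w => φ w • delta w) φ := by
    simpa [delta, ← lp.single_smul] using lp.hasSum_single ENNReal.ofNat_ne_top φ
  exact (hφ.mapL S).unique (by simpa only [map_smul, hdelta] using hφ.mapL T)

end Delta

section Hamiltonian

variable {V : Type*} [DecidableEq V]

def IsAndersonHamiltonian (G : SimpleGraph V) [DecidableRel G.Adj] (lam : ℝ)
    (H : (V → ℝ) → lp (fun _ : V => ℂ) 2 →L[ℂ] lp (fun _ : V => ℂ) 2) : Prop :=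
  ∀ (ω : V → ℝ) (v w : V), ⟪delta v, H ω (delta w)⟫ =
    (if G.Adj v w then (-1 : ℂ) else 0) + (if v = w then (lam * ω v : ℂ) else 0)

variable {G : SimpleGraph V} [DecidableRel G.Adj] {lam : ℝ}
  {H : (V → ℝ) → lp (fun _ : V => ℂ) 2 →L[ℂ] lp (fun _ : V => ℂ) 2}

theorem IsAndersonHamiltonian.update_sub
    (hH : IsAndersonHamiltonian G lam H)
    (ω : V → ℝ) (x : V) (u u' : ℝ) :
    H (Function.update ω x u') - H (Function.update ω x u)
      = ((lam * (u' - u) : ℝ) : ℂ) • InnerProductSpace.rankOne ℂ (delta x) (delta x) := by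
  unfold IsAndersonHamiltonian at hH
  refine continuousLinearMap_ext_delta fun v w => ?_
  simp only [sub_apply, smul_apply,
    InnerProductSpace.rankOne_apply, inner_sub_right, inner_smul_right, hH, inner_delta_left,
    delta_apply, Function.update_apply]
  split_ifs <;> simp_all [mul_sub]

theorem IsAndersonHamiltonian.inner_delta_resolvent_update_sub
    (hH : IsAndersonHamiltonian G lam H)
    {z : ℂ} {Res : (V → ℝ) → lp (fun _ : V => ℂ) 2 →L[ℂ] lp (fun _ : V => ℂ) 2}
    (hRes : ∀ ω, (H ω - z • 1) ∘L Res ω = 1 ∧ Res ω ∘L (H ω - z • 1) = 1)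
    (ω : V → ℝ) (x : V) (u u' : ℝ) :
    ⟪delta x, Res (Function.update ω x u) (delta x)⟫
        - ⟪delta x, Res (Function.update ω x u') (delta x)⟫
      = lam * (u' - u) * (⟪delta x, Res (Function.update ω x u) (delta x)⟫
        * ⟪delta x, Res (Function.update ω x u') (delta x)⟫) := by
  have hres := sub_eq_mul_sub_mul_of_mul_eq_one (hRes (Function.update ω x u)).2
    (hRes (Function.update ω x u')).1
  rw [sub_sub_sub_cancel_right, hH.update_sub] at hres
  have := congrArg (fun T => ⟪delta x, T (delta x)⟫) hres
  simpa [inner_sub_right, inner_smul_right, inner_delta_left, mul_comm, mul_left_comm] using this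

end Hamiltonian

theorem eq_inv_of_sub_eq_mul {g : ℝ → ℂ} {lam : ℝ}
    (hg : ∀ u u', g u - g u' = lam * (u' - u) * (g u * g u')) (h0 : g 0 ≠ 0) (u : ℝ) :
    g u = ((lam * u : ℝ) + (g 0)⁻¹)⁻¹ := by
  refine (inv_eq_of_mul_eq_one_right ?_).symm
  have := hg u 0
  push_cast at this ⊢
  field_simp
  linear_combination this

theorem norm_inv_ofReal_mul_add_le {lam : ℝ} (hlam : 0 < lam) (c : ℂ) {u : ℝ}
    (hu : u ≠ -c.re / lam) : ‖((lam * u : ℝ) + c)⁻¹‖ ≤ (lam * |u - -c.re / lam|)⁻¹ := by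
  have hre : lam * |u - -c.re / lam| = |(((lam * u : ℝ) : ℂ) + c).re| := by
    rw [Complex.add_re, Complex.ofReal_re, ← abs_of_pos hlam, ← abs_mul, abs_of_pos hlam]
    congr 1
    field_simp
    ring
  rw [norm_inv, hre]
  have : 0 < lam * |u - -c.re / lam| := mul_pos hlam (abs_pos.mpr (sub_ne_zero.mpr hu))
  exact inv_anti₀ (hre ▸ this) (Complex.abs_re_le_norm _)

theorem exists_norm_le_inv_abs_sub_of_sub_eq_mul {g : ℝ → ℂ} {lam : ℝ} (hlam : 0 < lam)
    (hg : ∀ u u', g u - g u' = lam * (u' - u) * (g u * g u')) :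
    ∃ b, ∀ u ≠ b, ‖g u‖ ≤ (lam * |u - b|)⁻¹ := by
  by_cases h0 : g 0 = 0
  · refine ⟨0, fun u _ => ?_⟩
    have : g u = 0 := by simpa [h0] using hg u 0
    rw [this, norm_zero]
    positivity
  · exact ⟨_, fun u hu => eq_inv_of_sub_eq_mul hg h0 u ▸ norm_inv_ofReal_mul_add_le hlam _ hu⟩

theorem integral_indicator_Iic_rpow_abs_sub {s : ℝ} (hs1 : s < 1) {t : ℝ} (ht : 0 < t) (b : ℝ) :
    ∫ u, (Iic t).indicator (fun r => r ^ (-s)) |u - b| = 2 * (t ^ (1 - s) / (1 - s)) := by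
  rw [integral_sub_right_eq_self (fun v => (Iic t).indicator (fun r => r ^ (-s)) |v|) b,
    integral_comp_abs, setIntegral_indicator measurableSet_Iic, Ioi_inter_Iic,
    ← intervalIntegral.integral_of_le ht.le, integral_rpow (Or.inl (by linarith)),
    Real.zero_rpow (by linarith), neg_add_eq_sub, sub_zero]

theorem rpow_neg_mul_le_indicator_add {r p R s t : ℝ} (hr : 0 ≤ r) (hp0 : 0 ≤ p) (hpR : p ≤ R)
    (hs : 0 < s) (ht : 0 < t) :
    r ^ (-s) * p ≤ R * (Iic t).indicator (fun r => r ^ (-s)) r + t ^ (-s) * p := by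
  by_cases hrt : r ≤ t
  · rw [indicator_of_mem (show r ∈ Iic t from hrt), mul_comm R]
    have := mul_nonneg (Real.rpow_nonneg ht.le (-s)) hp0
    nlinarith [mul_le_mul_of_nonneg_left hpR (Real.rpow_nonneg hr (-s))]
  · rw [indicator_of_notMem (show r ∉ Iic t from hrt), mul_zero, zero_add]
    exact mul_le_mul_of_nonneg_right
      (Real.rpow_le_rpow_of_nonpos ht (not_le.mp hrt).le (by linarith)) hp0

theorem truncation_bound_eq {R s : ℝ} (hR : 0 < R) (hs0 : 0 < s) (hs1 : s < 1) :
    R * (2 * ((s / (2 * R)) ^ (1 - s) / (1 - s))) + (s / (2 * R)) ^ (-s)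
      = R ^ s * (2 ^ s * s ^ (-s) / (1 - s)) := by
  set t := s / (2 * R) with ht
  have htpos : 0 < t := by positivity
  have h1s : 1 - s ≠ 0 := by linarith
  have hpow : t ^ (1 - s) = t * t ^ (-s) := by
    rw [sub_eq_add_neg, Real.rpow_add htpos, Real.rpow_one]
  have hneg : t ^ (-s) = R ^ s * 2 ^ s * s ^ (-s) := by
    rw [ht, Real.div_rpow hs0.le (by positivity), Real.rpow_neg hs0.le, Real.rpow_neg (by positivity),
      Real.mul_rpow (by norm_num) hR.le]
    field_simp
  have hRt : R * 2 * t = s := by rw [ht]; field_simp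
  clear_value t
  rw [show R ^ s * (2 ^ s * s ^ (-s) / (1 - s)) = t ^ (-s) / (1 - s) by rw [hneg]; ring, hpow,
    show R * (2 * (t * t ^ (-s) / (1 - s))) = R * 2 * t * t ^ (-s) / (1 - s) by ring, hRt]
  field_simp
  ring

theorem integral_rpow_mul_le_of_le_inv_abs_sub {ρ : ℝ → ℝ} {R : ℝ} (hρ0 : ∀ u, 0 ≤ ρ u)
    (hρR : ∀ u, ρ u ≤ R) (hρ1 : ∫ u, ρ u = 1) {s : ℝ} (hs0 : 0 < s) (hs1 : s < 1)
    {lam : ℝ} (hlam : 0 < lam) {f : ℝ → ℝ} (hf0 : ∀ u, 0 ≤ f u) {b : ℝ}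
    (hf : ∀ u ≠ b, f u ≤ (lam * |u - b|)⁻¹) :
    ∫ u, f u ^ s * ρ u ≤ R ^ s * (2 ^ s * s ^ (-s) / (1 - s)) * lam ^ (-s) := by
  have hR : 0 < R := by
    by_contra! hR
    simp [fun u => le_antisymm ((hρR u).trans hR) (hρ0 u)] at hρ1
  set t := s / (2 * R)
  have htpos : 0 < t := by positivity
  set φ : ℝ → ℝ := fun u => (Iic t).indicator (fun r => r ^ (-s)) |u - b|
  have hφ : ∫ u, φ u = 2 * (t ^ (1 - s) / (1 - s)) :=
    integral_indicator_Iic_rpow_abs_sub hs1 htpos b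
  have h1s : 0 < 1 - s := by linarith
  -- a non-integrable function has integral `0`, so both integrability facts come for free
  have hφint : Integrable φ := .of_integral_ne_zero (by rw [hφ]; positivity)
  have hρint : Integrable ρ := .of_integral_ne_zero (by simp [hρ1])
  have hpointwise : ∀ u ≠ b, f u ^ s * ρ u ≤ lam ^ (-s) * (R * φ u + t ^ (-s) * ρ u) := by
    intro u hu
    calc f u ^ s * ρ u ≤ (lam * |u - b|)⁻¹ ^ s * ρ u := by
          gcongr
          · exact hρ0 u
          · exact hf0 u
          · exact hf u hu
      _ = lam ^ (-s) * (|u - b| ^ (-s) * ρ u) := by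
          rw [Real.inv_rpow (by positivity), ← Real.rpow_neg (by positivity),
            Real.mul_rpow hlam.le (abs_nonneg _), mul_assoc]
      _ ≤ lam ^ (-s) * (R * φ u + t ^ (-s) * ρ u) := by
          gcongr
          exact rpow_neg_mul_le_indicator_add (abs_nonneg _) (hρ0 u) (hρR u) hs0 htpos
  calc ∫ u, f u ^ s * ρ u ≤ ∫ u, lam ^ (-s) * (R * φ u + t ^ (-s) * ρ u) := by
        refine integral_mono_of_nonneg (.of_forall fun u => by have := hρ0 u; have := hf0 u; positivity)
          (((hφint.const_mul R).add (hρint.const_mul _)).const_mul _) ?_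
        filter_upwards [(countable_singleton b).ae_notMem volume] with u hu
        exact hpointwise u hu
    _ = (R * (2 * (t ^ (1 - s) / (1 - s))) + t ^ (-s)) * lam ^ (-s) := by
        rw [integral_const_mul, integral_add (hφint.const_mul R) (hρint.const_mul _),
          integral_const_mul, integral_const_mul, hφ, hρ1, mul_one, mul_comm]
    _ = R ^ s * (2 ^ s * s ^ (-s) / (1 - s)) * lam ^ (-s) := by
        rw [truncation_bound_eq hR hs0 hs1]

theorem apriori_diagonal_bound_general {V : Type*} [DecidableEq V]
    (G : SimpleGraph V) [DecidableRel G.Adj]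
    (ρ : ℝ → ℝ) (hρ0 : ∀ u, 0 ≤ ρ u) (hρ1 : ∫ u, ρ u = 1)
    (R : ℝ) (hR : ∀ u, ρ u ≤ R)
    (lam : ℝ) (hlam : 0 < lam) (s : ℝ) (hs0 : 0 < s) (hs1 : s < 1)
    (H : (V → ℝ) → lp (fun _ : V => ℂ) 2 →L[ℂ] lp (fun _ : V => ℂ) 2)
    (hH : ∀ (ω : V → ℝ) (v w : V), ⟪delta v, H ω (delta w)⟫ =
      (if G.Adj v w then (-1 : ℂ) else 0) + (if v = w then (lam * ω v : ℂ) else 0))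
    (Res : (V → ℝ) → ℂ → lp (fun _ : V => ℂ) 2 →L[ℂ] lp (fun _ : V => ℂ) 2)
    (hRes : ∀ (ω : V → ℝ) (z : ℂ), z.im ≠ 0 →
      (H ω - z • 1) ∘L Res ω z = 1 ∧ Res ω z ∘L (H ω - z • 1) = 1)
    (ω : V → ℝ) (x : V) (z : ℂ) (hz : z.im ≠ 0) :
    ∫ u, ‖⟪delta x, Res (Function.update ω x u) z (delta x)⟫‖ ^ s * ρ u
      ≤ (R ^ s * (2 ^ s * s ^ (-s) / (1 - s))) * lam ^ (-s) := by
  obtain ⟨b, hb⟩ := exists_norm_le_inv_abs_sub_of_sub_eq_mul hlam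
    (IsAndersonHamiltonian.inner_delta_resolvent_update_sub hH (fun ω => hRes ω z hz) ω x)
  exact integral_rpow_mul_le_of_le_inv_abs_sub hρ0 hR hρ1 hs0 hs1 hlam (fun _ => norm_nonneg _) hb

/-- A priori bound on the diagonal Green's function of the Anderson Hamiltonian
`H = T + λω` on `ℓ²(V)` over a graph of uniformly bounded degree: averaging over the
potential `ω_x` at the site `x` alone (all other potentials fixed),
`𝔼_x(|⟨δ_x, (H-z)⁻¹ δ_x⟩|^s) ≤ C₁(s,ρ) λ^{-s}` with
`C₁(s,ρ) = ‖ρ‖_∞^s 2^s s^{-s}/(1-s)`, uniformly in `z ∈ ℂ \ ℝ`, in `x` and in the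
remaining potentials. -/
theorem apriori_diagonal_bound {V : Type*} [DecidableEq V]
    (G : SimpleGraph V) [G.LocallyFinite] [DecidableRel G.Adj] (N : ℕ) (hdeg : ∀ v, G.degree v ≤ N)
    (ρ : ℝ → ℝ) (hρmeas : Measurable ρ) (hρ0 : ∀ u, 0 ≤ ρ u) (hρ1 : ∫ u, ρ u = 1)
    (K : ℝ) (hρsupp : ∀ u, K < |u| → ρ u = 0)
    (R : ℝ) (hR : ∀ u, ρ u ≤ R)
    (lam : ℝ) (hlam : 0 < lam) (s : ℝ) (hs0 : 0 < s) (hs1 : s < 1)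
    (H : (V → ℝ) → lp (fun _ : V => ℂ) 2 →L[ℂ] lp (fun _ : V => ℂ) 2)
    (hH : ∀ (ω : V → ℝ) (v w : V), ⟪delta v, H ω (delta w)⟫ =
      (if G.Adj v w then (-1 : ℂ) else 0) + (if v = w then (lam * ω v : ℂ) else 0))
    (Res : (V → ℝ) → ℂ → lp (fun _ : V => ℂ) 2 →L[ℂ] lp (fun _ : V => ℂ) 2)
    (hRes : ∀ (ω : V → ℝ) (z : ℂ), z.im ≠ 0 →
      (H ω - z • 1) ∘L Res ω z = 1 ∧ Res ω z ∘L (H ω - z • 1) = 1)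
    (ω : V → ℝ) (x : V) (z : ℂ) (hz : z.im ≠ 0) :
    ∫ u, ‖⟪delta x, Res (Function.update ω x u) z (delta x)⟫‖ ^ s * ρ u
      ≤ (R ^ s * (2 ^ s * s ^ (-s) / (1 - s))) * lam ^ (-s) :=
  apriori_diagonal_bound_general G ρ hρ0 hρ1 R hR lam hlam s hs0 hs1 H hH Res hRes ω x z hz
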